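/- Let N, W, n be positive integers with W, n ≤ N, p := W/N ∈ (0,1), and np(1−p) ≥ 1. Then the total variation distance between the hypergeometric distribution H(N, W, n) and the binomial distribution B(n, p) satisfies δ(H(N,W,n), B(n,p)) ≤ (n−1)/(N−1). -/

import Mathlib

/-- pmf of the hypergeometric distribution `H(N,W,n)` at `k`. -/
noncomputable def hyperPMF (N W n k : ℕ) : ℝ :=
  ((W.choose k : ℝ) * ((N - W).choose (n - k) : ℝ)) / (N.choose n : ℝ)

/-- pmf of the binomial distribution `B(n,p)` at `k`. -/
noncomputable def binomPMF (n : ℕ) (p : ℝ) (k : ℕ) : ℝ :=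
  (n.choose k : ℝ) * p ^ k * (1 - p) ^ (n - k)

/-- total variation distance between `H(N,W,n)` and `B(n,p)`, as the maximal
deviation over subsets `A` of `{0,1,…,n}`. -/
noncomputable def tvDist (N W n : ℕ) (p : ℝ) : ℝ :=
  ⨆ A : Finset (Fin (n+1)), |∑ k ∈ A, (hyperPMF N W n k - binomPMF n p k)|

/-!
Stein's method. For `A ⊆ {0, …, n}` let `f` solve the binomial Stein equation
`p (n - j) f(j + 1) - (1 - p) j f(j) = 1_A(j) - B(n, p)(A)`. Multiplying by `N`, using `N p = W` and
averaging over `X ~ H(N, W, n)`, the hypergeometric Stein identity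
`E[(W - X)(n - X) g(X + 1) - X (N - W - (n - X)) g(X)] = 0` leaves
`N (H(A) - B(A)) = E[X (n - X) (f(X + 1) - f(X))]`. The increments of `f` are at most
`1 / (n p (1 - p))` in absolute value, and `E[X (n - X)] = n (n - 1) W (N - W) / (N (N - 1))`;
since `n p (1 - p) = n W (N - W) / N²`, the two combine to `(n - 1) / (N - 1)`.
-/

open Finset

theorem cast_choose_succ_mul {R : Type*} [Ring R] (a k : ℕ) :
    (a.choose (k + 1) : R) * (k + 1) = a.choose k * (a - k) := by
  rcases le_or_gt k a with hk | hk
  · have := congrArg (Nat.cast (R := R)) (Nat.choose_succ_right_eq a k)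
    push_cast [Nat.cast_sub hk] at this
    exact this
  · simp [Nat.choose_eq_zero_of_lt hk, Nat.choose_eq_zero_of_lt (hk.trans k.lt_succ_self)]

section Binomial

variable {n : ℕ} {p : ℝ}

theorem binomPMF_nonneg (hp0 : 0 ≤ p) (hp1 : p ≤ 1) (k : ℕ) : 0 ≤ binomPMF n p k := by
  have : 0 ≤ 1 - p := by linarith
  unfold binomPMF
  positivity

theorem binomPMF_pos (hp0 : 0 < p) (hp1 : p < 1) {k : ℕ} (hk : k ≤ n) :
    0 < binomPMF n p k := by
  have : 0 < 1 - p := by linarith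
  have := Nat.choose_pos hk
  unfold binomPMF
  positivity

theorem succ_mul_binomPMF_succ (n : ℕ) (p : ℝ) (k : ℕ) :
    (k + 1) * (1 - p) * binomPMF n p (k + 1) = (n - k) * p * binomPMF n p k := by
  unfold binomPMF
  rcases lt_or_ge k n with hk | hk
  · rw [show n - k = n - (k + 1) + 1 by omega]
    linear_combination
      (p ^ (k + 1) * (1 - p) ^ (n - (k + 1) + 1)) * cast_choose_succ_mul (R := ℝ) n k
  · rcases hk.eq_or_lt with rfl | hk
    · simp
    · simp [Nat.choose_eq_zero_of_lt hk, Nat.choose_eq_zero_of_lt (hk.trans k.lt_succ_self)]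

theorem binomPMF_one_sub {k : ℕ} (hk : k ≤ n) :
    binomPMF n (1 - p) k = binomPMF n p (n - k) := by
  unfold binomPMF
  rw [Nat.choose_symm hk, Nat.sub_sub_self hk, sub_sub_cancel]
  ring

theorem sum_binomPMF (n : ℕ) (p : ℝ) : ∑ k ∈ range (n + 1), binomPMF n p k = 1 := by
  have := (add_pow p (1 - p) n).symm
  rw [add_sub_cancel, one_pow] at this
  rw [← this]
  exact sum_congr rfl fun k _ => by unfold binomPMF; ring

theorem sum_range_sub_mul_binomPMF (n : ℕ) (p : ℝ) (j : ℕ) :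
    ∑ k ∈ range j, (n * p - k) * binomPMF n p k = (1 - p) * j * binomPMF n p j := by
  induction j with
  | zero => simp
  | succ j ih =>
    rw [sum_range_succ, ih]
    push_cast
    linear_combination -succ_mul_binomPMF_succ n p j

-- `binomCDF n p j = P(B(n, p) < j)`, with a strict inequality.
noncomputable def binomCDF (n : ℕ) (p : ℝ) (j : ℕ) : ℝ := ∑ k ∈ range j, binomPMF n p k

theorem binomCDF_succ (n : ℕ) (p : ℝ) (j : ℕ) :
    binomCDF n p (j + 1) = binomCDF n p j + binomPMF n p j :=
  sum_range_succ _ _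

theorem binomCDF_nonneg (hp0 : 0 ≤ p) (hp1 : p ≤ 1) (j : ℕ) : 0 ≤ binomCDF n p j :=
  sum_nonneg fun k _ => binomPMF_nonneg hp0 hp1 k

theorem one_sub_binomCDF {j : ℕ} (hj : j ≤ n + 1) :
    1 - binomCDF n p j = binomCDF n (1 - p) (n + 1 - j) := by
  have htail : 1 - binomCDF n p j = ∑ k ∈ Ico j (n + 1), binomPMF n p k := by
    rw [← sum_binomPMF n p, ← sum_range_add_sum_Ico _ hj, binomCDF, add_sub_cancel_left]
  have hreflect := sum_Ico_reflect (binomPMF n p) 0 (show n + 1 - j ≤ n + 1 by omega)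
  rw [Nat.sub_sub_self hj, Nat.sub_zero] at hreflect
  rw [htail, ← hreflect, binomCDF, range_eq_Ico]
  exact sum_congr rfl fun k hk => (binomPMF_one_sub (by simp at hk; omega)).symm

theorem binomCDF_le_one (hp0 : 0 ≤ p) (hp1 : p ≤ 1) {j : ℕ} (hj : j ≤ n + 1) :
    binomCDF n p j ≤ 1 := by
  have := binomCDF_nonneg (n := n) (p := 1 - p) (by linarith) (by linarith) (n + 1 - j)
  linarith [one_sub_binomCDF (p := p) hj]

theorem mul_binomCDF_le (hp0 : 0 ≤ p) (hp1 : p ≤ 1) (j : ℕ) :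
    p * (n - j) * binomCDF n p j ≤ (1 - p) * j * binomCDF n p (j + 1) := by
  have hterm : ∀ k ∈ range j,
      p * (n - j) * binomPMF n p k ≤ (1 - p) * j * binomPMF n p (k + 1) := by
    intro k hk
    have hkj : (k : ℝ) + 1 ≤ j := by exact_mod_cast mem_range.mp hk
    have hb := binomPMF_nonneg (n := n) hp0 hp1 k
    have hrec := succ_mul_binomPMF_succ n p k
    rw [← mul_le_mul_iff_of_pos_right (by positivity : (0 : ℝ) < k + 1)]
    have : (n - j) * (k + 1) ≤ j * (n - k : ℝ) := by nlinarith
    nlinarith [mul_le_mul_of_nonneg_left this (mul_nonneg hp0 hb)]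
  calc p * (n - j) * binomCDF n p j
      ≤ ∑ k ∈ range j, (1 - p) * j * binomPMF n p (k + 1) := by
        rw [binomCDF, mul_sum]; exact sum_le_sum hterm
    _ ≤ (1 - p) * j * binomCDF n p (j + 1) := by
        rw [← mul_sum, binomCDF, sum_range_succ']
        have := binomPMF_nonneg (n := n) hp0 hp1 0
        have : 0 ≤ (1 - p) * j := mul_nonneg (by linarith) j.cast_nonneg
        nlinarith

theorem mul_one_sub_binomCDF_le (hp0 : 0 ≤ p) (hp1 : p ≤ 1) {j : ℕ} (hj : j ≤ n) :
    (1 - p) * j * (1 - binomCDF n p (j + 1)) ≤ p * (n - j) * (1 - binomCDF n p j) := by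
  have := mul_binomCDF_le (n := n) (p := 1 - p) (by linarith) (by linarith) (n - j)
  rw [one_sub_binomCDF (by omega), one_sub_binomCDF (by omega),
    show n + 1 - (j + 1) = n - j by omega, show n + 1 - j = n - j + 1 by omega]
  push_cast [Nat.cast_sub hj] at this ⊢
  linarith

theorem one_sub_binomCDF_div_add_binomCDF_div_le (hp0 : 0 < p) (hp1 : p < 1) {j : ℕ}
    (h1j : 1 ≤ j) (hjn : j < n) :
    (1 - binomCDF n p (j + 1)) / (p * (n - j)) + binomCDF n p j / ((1 - p) * j)
      ≤ 1 / (n * p * (1 - p)) := by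
  -- the reflection `k ↦ n - k` exchanges `p` with `1 - p` and the two summands
  wlog hjp : (j : ℝ) ≤ n * p generalizing p j
  · have key := this (p := 1 - p) (j := n - j) (by linarith) (by linarith) (by omega) (by omega)
      (by push_cast [Nat.cast_sub hjn.le]; linarith)
    rw [show n - j + 1 = n + 1 - j by omega, ← one_sub_binomCDF (by omega),
      show n - j = n + 1 - (j + 1) by omega, ← one_sub_binomCDF (by omega)] at key
    push_cast [Nat.cast_sub hjn.le, Nat.cast_sub (show j + 1 ≤ n + 1 by omega)] at key
    convert key using 1 <;> ring_nf
  have hq : 0 < 1 - p := by linarith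
  have hjR : (1 : ℝ) ≤ j := by exact_mod_cast h1j
  have hjnR : (j : ℝ) + 1 ≤ n := by exact_mod_cast hjn
  -- below the mean, `(n p - j) F(j) ≤ ∑_{k < j} (n p - k) b(k)`, which telescopes
  have hGB : (n * p - j) * binomCDF n p j ≤ (1 - p) * j * binomPMF n p j := by
    rw [← sum_range_sub_mul_binomPMF, binomCDF, mul_sum]
    refine sum_le_sum fun k hk => mul_le_mul_of_nonneg_right ?_ (binomPMF_nonneg hp0.le hp1.le k)
    have : (k : ℝ) ≤ j := by exact_mod_cast (mem_range.mp hk).le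
    linarith
  have hR : 0 ≤ 1 - binomCDF n p (j + 1) := by
    linarith [binomCDF_le_one (n := n) hp0.le hp1.le (show j + 1 ≤ n + 1 by omega)]
  rw [binomCDF_succ] at hR ⊢
  set G := binomCDF n p j
  set B := binomPMF n p j
  have hG : 0 ≤ G := binomCDF_nonneg hp0.le hp1.le j
  have hB : 0 ≤ B := binomPMF_nonneg hp0.le hp1.le j
  have hd : 0 < n * p * (1 - p) := by
    have : (0 : ℝ) < n := by linarith
    positivity
  have h1 : (1 - (G + B)) / (p * (n - j)) ≤ (1 - (G + B)) / (n * p * (1 - p)) :=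
    div_le_div_of_nonneg_left hR hd (by nlinarith)
  have h2 : G / ((1 - p) * j) ≤ (G + (1 - p) * B) / (n * p * (1 - p)) := by
    rw [div_le_div_iff₀ (by positivity) hd]
    nlinarith
  calc _ ≤ (1 - (G + B)) / (n * p * (1 - p)) + (G + (1 - p) * B) / (n * p * (1 - p)) :=
        add_le_add h1 h2
    _ ≤ 1 / (n * p * (1 - p)) := by
        rw [← add_div]
        exact div_le_div_of_nonneg_right (by nlinarith) hd.le

end Binomial

section Stein

variable {n : ℕ} {p : ℝ}

/-- Weighted by `binomPMF n p m` and summed over `m ∈ A`, these kernels give the solution of the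
Stein equation `p (n - j) f(j + 1) - (1 - p) j f(j) = 1_A(j) - P(B(n, p) ∈ A)`. -/
noncomputable def binomSteinKernel (n : ℕ) (p : ℝ) (m j : ℕ) : ℝ :=
  ((if m < j then 1 else 0) - binomCDF n p j) / ((1 - p) * j * binomPMF n p j)

noncomputable def binomSteinSol (n : ℕ) (p : ℝ) (A : Finset ℕ) (j : ℕ) : ℝ :=
  ∑ m ∈ A, binomPMF n p m * binomSteinKernel n p m j

theorem binomSteinKernel_succ (n : ℕ) (p : ℝ) (m j : ℕ) :
    binomSteinKernel n p m (j + 1)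
      = ((if m < j + 1 then 1 else 0) - binomCDF n p (j + 1)) / (p * (n - j) * binomPMF n p j) := by
  rw [binomSteinKernel, Nat.cast_succ]
  congr 1
  linear_combination succ_mul_binomPMF_succ n p j

theorem mul_binomSteinKernel (hp1 : p ≠ 1) (m j : ℕ) :
    (1 - p) * j * binomSteinKernel n p m j
      = ((if m < j then 1 else 0) - binomCDF n p j) / binomPMF n p j := by
  rcases Nat.eq_zero_or_pos j with rfl | hj0
  · simp [binomCDF]
  have : (1 - p) * j ≠ 0 := mul_ne_zero (sub_ne_zero.mpr hp1.symm) (by positivity)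
  rw [binomSteinKernel, ← mul_div_assoc, mul_div_mul_left _ _ this]

theorem mul_binomSteinKernel_succ (hp0 : p ≠ 0) {j : ℕ} (hj : j ≤ n) {m : ℕ}
    (hm : m ≤ n) :
    p * (n - j) * binomSteinKernel n p m (j + 1)
      = ((if m < j + 1 then 1 else 0) - binomCDF n p (j + 1)) / binomPMF n p j := by
  rcases hj.lt_or_eq with hj | rfl
  · have : p * (n - j) ≠ 0 := mul_ne_zero hp0 (sub_ne_zero.mpr (by exact_mod_cast hj.ne'))
    rw [binomSteinKernel_succ, ← mul_div_assoc, mul_div_mul_left _ _ this]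
  · rw [binomCDF, sum_binomPMF, if_pos (by omega)]
    simp

theorem binomSteinKernel_stein_eq (hp0 : 0 < p) (hp1 : p < 1) {j : ℕ} (hj : j ≤ n) {m : ℕ}
    (hm : m ≤ n) :
    p * (n - j) * binomSteinKernel n p m (j + 1) - (1 - p) * j * binomSteinKernel n p m j
      = ((if m = j then 1 else 0) - binomPMF n p j) / binomPMF n p j := by
  rw [mul_binomSteinKernel_succ hp0.ne' hj hm, mul_binomSteinKernel hp1.ne, ← sub_div,
    binomCDF_succ]
  congr 1
  split_ifs <;> first | omega | ring

theorem binomSteinSol_stein_eq (hp0 : 0 < p) (hp1 : p < 1) {A : Finset ℕ}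
    (hA : A ⊆ range (n + 1)) {j : ℕ} (hj : j ≤ n) :
    p * (n - j) * binomSteinSol n p A (j + 1) - (1 - p) * j * binomSteinSol n p A j
      = (if j ∈ A then 1 else 0) - ∑ m ∈ A, binomPMF n p m := by
  have hb : binomPMF n p j ≠ 0 := (binomPMF_pos hp0 hp1 hj).ne'
  calc _ = ∑ m ∈ A, binomPMF n p m * (p * (n - j) * binomSteinKernel n p m (j + 1)
            - (1 - p) * j * binomSteinKernel n p m j) := by
        simp only [binomSteinSol, mul_sum, ← sum_sub_distrib]
        exact sum_congr rfl fun m _ => by ring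
    _ = ∑ m ∈ A, ((if m = j then 1 else 0) - binomPMF n p m) := by
        refine sum_congr rfl fun m hmA => ?_
        rw [binomSteinKernel_stein_eq hp0 hp1 hj (by simpa [Nat.lt_succ_iff] using hA hmA)]
        split_ifs with hmj
        · subst hmj; field_simp
        · field_simp; ring
    _ = _ := by rw [sum_sub_distrib, sum_ite_eq']

theorem binomSteinKernel_succ_le (hp0 : 0 < p) (hp1 : p < 1) {j : ℕ} (h1j : 1 ≤ j) (hjn : j < n)
    {m : ℕ} (hmj : m ≠ j) :
    binomSteinKernel n p m (j + 1) ≤ binomSteinKernel n p m j := by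
  have hb := binomPMF_pos hp0 hp1 hjn.le
  have hjR : (1 : ℝ) ≤ j := by exact_mod_cast h1j
  have hjnR : (j : ℝ) < n := by exact_mod_cast hjn
  rw [binomSteinKernel_succ, binomSteinKernel,
    div_le_div_iff₀ (mul_pos (mul_pos hp0 (by linarith)) hb)
      (mul_pos (mul_pos (by linarith) (by linarith)) hb)]
  rcases hmj.lt_or_gt with hmj | hmj
  · rw [if_pos (by omega), if_pos hmj]
    nlinarith [mul_one_sub_binomCDF_le (n := n) hp0.le hp1.le hjn.le]
  · rw [if_neg (by omega), if_neg (by omega)]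
    nlinarith [mul_binomCDF_le (n := n) hp0.le hp1.le j]

theorem binomPMF_mul_binomSteinKernel_sub_le (hp0 : 0 < p) (hp1 : p < 1) {j : ℕ} (h1j : 1 ≤ j)
    (hjn : j < n) :
    binomPMF n p j * (binomSteinKernel n p j (j + 1) - binomSteinKernel n p j j)
      ≤ 1 / (n * p * (1 - p)) := by
  have hb := (binomPMF_pos hp0 hp1 hjn.le).ne'
  have hjR : (j : ℝ) ≠ 0 := by positivity
  have hnj : (n : ℝ) - j ≠ 0 := sub_ne_zero.mpr (by exact_mod_cast hjn.ne')
  have hq : 1 - p ≠ 0 := sub_ne_zero.mpr hp1.ne'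
  convert one_sub_binomCDF_div_add_binomCDF_div_le hp0 hp1 h1j hjn using 1
  rw [binomSteinKernel_succ, binomSteinKernel, if_pos j.lt_succ_self, if_neg (lt_irrefl j)]
  field_simp
  ring

theorem binomSteinSol_succ_sub_le (hp0 : 0 < p) (hp1 : p < 1) (A : Finset ℕ) {j : ℕ}
    (h1j : 1 ≤ j) (hjn : j < n) :
    binomSteinSol n p A (j + 1) - binomSteinSol n p A j ≤ 1 / (n * p * (1 - p)) := by
  have hterm : ∀ m ∈ A, binomPMF n p m * binomSteinKernel n p m (j + 1)
      - binomPMF n p m * binomSteinKernel n p m j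
        ≤ if m = j then 1 / (n * p * (1 - p)) else 0 := by
    intro m _
    split_ifs with hmj
    · subst hmj
      rw [← mul_sub]
      exact binomPMF_mul_binomSteinKernel_sub_le hp0 hp1 h1j hjn
    · rw [← mul_sub]
      exact mul_nonpos_of_nonneg_of_nonpos (binomPMF_nonneg hp0.le hp1.le m)
        (sub_nonpos.mpr (binomSteinKernel_succ_le hp0 hp1 h1j hjn hmj))
  calc _ = ∑ m ∈ A, (binomPMF n p m * binomSteinKernel n p m (j + 1)
            - binomPMF n p m * binomSteinKernel n p m j) := by
        rw [binomSteinSol, binomSteinSol, sum_sub_distrib]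
    _ ≤ ∑ m ∈ A, if m = j then 1 / (n * p * (1 - p)) else 0 := sum_le_sum hterm
    _ ≤ 1 / (n * p * (1 - p)) := by
        have : (0 : ℝ) < n := by exact_mod_cast (show 0 < n by omega)
        have : 0 < 1 - p := by linarith
        rw [sum_ite_eq']
        split_ifs
        · exact le_rfl
        · positivity

theorem binomSteinSol_range_eq_zero {j : ℕ} (hj : j ≤ n + 1) :
    binomSteinSol n p (range (n + 1)) j = 0 := by
  have hind :
      ∑ m ∈ range (n + 1), binomPMF n p m * (if m < j then 1 else 0) = binomCDF n p j := by
    rw [← sum_range_add_sum_Ico _ hj, binomCDF, ← add_zero (∑ k ∈ range j, binomPMF n p k)]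
    congr 1
    · exact sum_congr rfl fun m hm => by rw [if_pos (mem_range.mp hm), mul_one]
    · exact sum_eq_zero fun m hm => by rw [if_neg (not_lt.mpr (mem_Ico.mp hm).1), mul_zero]
  simp only [binomSteinSol, binomSteinKernel, mul_div_assoc', ← sum_div, mul_sub, sum_sub_distrib,
    hind, ← sum_mul, sum_binomPMF, one_mul, sub_self, zero_div]

theorem binomSteinSol_add_binomSteinSol_sdiff {A : Finset ℕ} (hA : A ⊆ range (n + 1)) {j : ℕ}
    (hj : j ≤ n + 1) :
    binomSteinSol n p A j + binomSteinSol n p (range (n + 1) \ A) j = 0 := by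
  rw [← binomSteinSol_range_eq_zero (p := p) hj, binomSteinSol, binomSteinSol, binomSteinSol,
    add_comm, sum_sdiff hA]

theorem abs_binomSteinSol_succ_sub_le (hp0 : 0 < p) (hp1 : p < 1) {A : Finset ℕ}
    (hA : A ⊆ range (n + 1)) {j : ℕ} (h1j : 1 ≤ j) (hjn : j < n) :
    |binomSteinSol n p A (j + 1) - binomSteinSol n p A j| ≤ 1 / (n * p * (1 - p)) := by
  have hcompl := binomSteinSol_succ_sub_le hp0 hp1 (range (n + 1) \ A) h1j hjn
  have h1 := binomSteinSol_add_binomSteinSol_sdiff (p := p) hA (j := j + 1) (by omega)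
  have h2 := binomSteinSol_add_binomSteinSol_sdiff (p := p) hA (j := j) (by omega)
  rw [abs_le]
  constructor
  · linarith
  · exact binomSteinSol_succ_sub_le hp0 hp1 A h1j hjn

end Stein

section Hypergeometric

variable {N W n : ℕ}

theorem hyperPMF_nonneg (N W n k : ℕ) : 0 ≤ hyperPMF N W n k := by
  unfold hyperPMF
  positivity

theorem sum_hyperPMF (hWN : W ≤ N) (hnN : n ≤ N) :
    ∑ k ∈ range (n + 1), hyperPMF N W n k = 1 := by
  have hvand := congrArg (Nat.cast (R := ℝ)) (Nat.add_choose_eq W (N - W) n)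
  rw [Nat.add_sub_cancel' hWN, Nat.sum_antidiagonal_eq_sum_range_succ_mk] at hvand
  push_cast at hvand
  simp only [hyperPMF, ← sum_div, ← hvand]
  exact div_self (by exact_mod_cast (Nat.choose_pos hnN).ne')

theorem hyperPMF_succ_mul (hWN : W ≤ N) {j : ℕ} (hj : j < n) :
    hyperPMF N W n (j + 1) * ((j + 1) * (N - W - (n - (j + 1))))
      = hyperPMF N W n j * ((W - j) * (n - j)) := by
  have hW := cast_choose_succ_mul (R := ℝ) W j
  have hM := cast_choose_succ_mul (R := ℝ) (N - W) (n - (j + 1))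
  rw [show n - (j + 1) + 1 = n - j by omega] at hM
  push_cast [Nat.cast_sub hWN, Nat.cast_sub hj, Nat.cast_sub hj.le] at hM ⊢
  simp only [hyperPMF, div_mul_eq_mul_div]
  congr 1
  linear_combination ((N - W).choose (n - j) * (n - j : ℝ)) * hW
    - ((W.choose (j + 1) : ℝ) * (j + 1)) * hM

theorem sum_hyperPMF_stein (hWN : W ≤ N) (g : ℕ → ℝ) :
    ∑ j ∈ range (n + 1), hyperPMF N W n j
      * ((W - j) * (n - j) * g (j + 1) - j * (N - W - (n - j)) * g j) = 0 := by
  simp only [mul_sub, sum_sub_distrib, sub_eq_zero]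
  rw [sum_range_succ, sum_range_succ']
  simp only [Nat.cast_zero, sub_self, mul_zero, zero_mul, add_zero]
  refine sum_congr rfl fun j hj => ?_
  have := hyperPMF_succ_mul (N := N) (W := W) hWN (mem_range.mp hj)
  push_cast
  linear_combination -g (j + 1) * this

theorem cast_mul_sub_one_mul_sum_hyperPMF (hWN : W ≤ N) (hnN : n ≤ N) :
    N * (N - 1) * ∑ j ∈ range (n + 1), hyperPMF N W n j * (j * (n - j))
      = n * (n - 1) * W * (N - W) := by
  have hone := sum_hyperPMF_stein (n := n) hWN (fun _ => 1)
  have hid := sum_hyperPMF_stein (n := n) hWN (fun j => j)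
  simp only [mul_one] at hone
  push_cast at hid
  -- `N (N - 1) j (n - j) - n (n - 1) W (N - W)` is a combination of the two Stein summands
  have hpoly : ∀ j : ℕ, N * (N - 1) * (hyperPMF N W n j * (j * (n - j)))
      = (W * n - W - N * n) * (hyperPMF N W n j * ((W - j) * (n - j) - j * (N - W - (n - j))))
        + N * (hyperPMF N W n j * ((W - j) * (n - j) * (j + 1) - j * (N - W - (n - j)) * j))
        + n * (n - 1) * W * (N - W) * hyperPMF N W n j := by
    intro j; ring
  rw [mul_sum, sum_congr rfl fun j _ => hpoly j, sum_add_distrib, sum_add_distrib, ← mul_sum,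
    ← mul_sum, ← mul_sum, hone, hid, sum_hyperPMF hWN hnN]
  ring

end Hypergeometric

theorem cast_mul_sum_hyperPMF_sub_binomPMF {N W n : ℕ} {p : ℝ} (hnN : n ≤ N)
    (hNp : (N : ℝ) * p = W) (hp0 : 0 < p) (hp1 : p < 1) {A : Finset ℕ}
    (hA : A ⊆ range (n + 1)) :
    N * ∑ j ∈ A, (hyperPMF N W n j - binomPMF n p j)
      = ∑ j ∈ range (n + 1), hyperPMF N W n j * (j * (n - j))
          * (binomSteinSol n p A (j + 1) - binomSteinSol n p A j) := by
  have hWN : W ≤ N := by exact_mod_cast hNp ▸ (by nlinarith : (N : ℝ) * p ≤ N)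
  set f := binomSteinSol n p A
  have hstein := sum_hyperPMF_stein (n := n) hWN f
  calc (N : ℝ) * ∑ j ∈ A, (hyperPMF N W n j - binomPMF n p j)
      = ∑ j ∈ range (n + 1), hyperPMF N W n j * (N * ((if j ∈ A then 1 else 0)
          - ∑ m ∈ A, binomPMF n p m)) := by
        simp only [mul_sub, mul_ite, mul_one, mul_zero, sum_sub_distrib, sum_ite_mem,
          inter_eq_right.mpr hA, ← sum_mul, sum_hyperPMF hWN hnN]
        ring
    _ = ∑ j ∈ range (n + 1),
          hyperPMF N W n j * (N * (p * (n - j) * f (j + 1) - (1 - p) * j * f j)) := by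
        refine sum_congr rfl fun j hj => ?_
        rw [binomSteinSol_stein_eq hp0 hp1 hA (Nat.lt_succ_iff.mp (mem_range.mp hj))]
    _ = _ := by
        rw [← sub_zero (∑ j ∈ range (n + 1), _), ← hstein, ← sum_sub_distrib]
        refine sum_congr rfl fun j _ => ?_
        linear_combination (hyperPMF N W n j * ((n - j) * f (j + 1) + j * f j)) * hNp

theorem abs_sum_hyperPMF_sub_binomPMF_le {N W n : ℕ} {p : ℝ} (hn : 0 < n) (hnN : n ≤ N)
    (hNp : (N : ℝ) * p = W) (hp0 : 0 < p) (hp1 : p < 1) {A : Finset ℕ}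
    (hA : A ⊆ range (n + 1)) :
    |∑ j ∈ A, (hyperPMF N W n j - binomPMF n p j)| ≤ ((n : ℝ) - 1) / ((N : ℝ) - 1) := by
  have hNpos : (0 : ℝ) < N := by exact_mod_cast hn.trans_le hnN
  have hWN : W < N := by exact_mod_cast hNp ▸ (mul_lt_iff_lt_one_right hNpos).mpr hp1
  have hW : 0 < W := by exact_mod_cast hNp ▸ mul_pos hNpos hp0
  have hN1 : (1 : ℝ) < N := by exact_mod_cast (show 1 < N by omega)
  have hnR : (0 : ℝ) < n := by exact_mod_cast hn
  have hq : 0 < 1 - p := by linarith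
  set c := 1 / (n * p * (1 - p))
  set M := ∑ j ∈ range (n + 1), hyperPMF N W n j * (j * (n - j))
  have hM := cast_mul_sub_one_mul_sum_hyperPMF (n := n) hWN.le hnN
  have hS : N * |∑ j ∈ A, (hyperPMF N W n j - binomPMF n p j)| ≤ M * c := by
    rw [← abs_of_pos hNpos, ← abs_mul, cast_mul_sum_hyperPMF_sub_binomPMF hnN hNp hp0 hp1 hA,
      sum_mul]
    refine (abs_sum_le_sum_abs _ _).trans (sum_le_sum fun j hj => ?_)
    have hjn : j ≤ n := Nat.lt_succ_iff.mp (mem_range.mp hj)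
    have hw : 0 ≤ hyperPMF N W n j * (j * (n - j)) :=
      mul_nonneg (hyperPMF_nonneg N W n j)
        (mul_nonneg j.cast_nonneg (sub_nonneg.mpr (by exact_mod_cast hjn)))
    rcases Nat.eq_zero_or_pos j with rfl | h1j
    · simp
    rcases hjn.lt_or_eq with hjn | rfl
    · rw [abs_mul, abs_of_nonneg hw]
      exact mul_le_mul_of_nonneg_left (abs_binomSteinSol_succ_sub_le hp0 hp1 hA h1j hjn) hw
    · simp
  have hcW : c * (n * W * (N - W)) = N ^ 2 := by
    rw [← hNp]; simp only [c]; field_simp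
  rw [le_div_iff₀ (by linarith)]
  refine le_of_mul_le_mul_left ?_ (by positivity : (0 : ℝ) < N ^ 2)
  calc (N : ℝ) ^ 2 * (|∑ j ∈ A, (hyperPMF N W n j - binomPMF n p j)| * (N - 1))
      = N * (N - 1) * (N * |∑ j ∈ A, (hyperPMF N W n j - binomPMF n p j)|) := by ring
    _ ≤ N * (N - 1) * (M * c) := mul_le_mul_of_nonneg_left hS (by nlinarith)
    _ = N ^ 2 * (n - 1) := by rw [← mul_assoc, hM]; linear_combination (n - 1 : ℝ) * hcW

theorem stmt_9_general (N W n : ℕ) (hn : 0 < n) (hnN : n ≤ N) (p : ℝ) (hp : p = (W : ℝ) / N)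
    (hp0 : 0 < p) (hp1 : p < 1) :
    tvDist N W n p ≤ ((n : ℝ) - 1) / ((N : ℝ) - 1) := by
  have hNp : (N : ℝ) * p = W := by
    rw [hp, mul_div_cancel₀]
    exact_mod_cast (hn.trans_le hnN).ne'
  refine ciSup_le fun A => ?_
  rw [← show ∑ j ∈ A.map Fin.valEmbedding, (hyperPMF N W n j - binomPMF n p j)
      = ∑ k ∈ A, (hyperPMF N W n k - binomPMF n p k) from sum_map _ _ _]
  refine abs_sum_hyperPMF_sub_binomPMF_le hn hnN hNp hp0 hp1 fun j hj => ?_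
  obtain ⟨k, -, rfl⟩ := mem_map.mp hj
  exact mem_range.mpr k.is_lt

theorem stmt_9 (N W n : ℕ) (hN : 0 < N) (hW : 0 < W) (hn : 0 < n)
    (hWN : W ≤ N) (hnN : n ≤ N) (p : ℝ) (hp : p = (W : ℝ) / N)
    (hp0 : 0 < p) (hp1 : p < 1) (hnp : 1 ≤ n * p * (1 - p)) :
    tvDist N W n p ≤ ((n : ℝ) - 1) / ((N : ℝ) - 1) :=
  stmt_9_general N W n hn hnN p hp hp0 hp1
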